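/- arXiv:1508.06395 — 2 statements merged into one kernel-verified Lean document; each statement's English description precedes it below -/
import Mathlib

section
/- Let ρ be a bipartite distribution on U × V, let n ≥ 1, let 0 ≤ p ≤ 1, and let m ≥ 1 be an integer. Then col_ρ(n, 1−(1−p)^m) ≤ m · col_ρ(n, p), where the inequality is interpreted in ℕ ∪ {∞}. -/
open scoped BigOperators ENNReal

namespace SR

variable {U V X Y : Type*}

/-- `μ` is a probability distribution on a finite type. -/
def IsDist {α : Type*} [Fintype α] (μ : α → ℝ) : Prop :=
  (∀ a, 0 ≤ μ a) ∧ ∑ a, μ a = 1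

/-- Expectation of `f` under `μ`. -/
def expect {α : Type*} [Fintype α] (μ : α → ℝ) (f : α → ℝ) : ℝ :=
  ∑ a, μ a * f a

/-- First (`U`-)marginal of a bipartite distribution. -/
def margFst [Fintype V] (ρ : U × V → ℝ) : U → ℝ :=
  fun u => ∑ v, ρ (u, v)

/-- Second (`V`-)marginal of a bipartite distribution. -/
def margSnd [Fintype U] (ρ : U × V → ℝ) : V → ℝ :=
  fun v => ∑ u, ρ (u, v)

/-- Maximum correlation of a bipartite distribution (sSup of the empty set is 0). -/
noncomputable def cor [Fintype U] [Fintype V] (ρ : U × V → ℝ) : ℝ :=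
  sSup { t : ℝ | ∃ (f : U → ℝ) (g : V → ℝ),
      expect (margFst ρ) f = 0 ∧ expect (margSnd ρ) g = 0 ∧
      expect (margFst ρ) (fun u => f u ^ 2) = 1 ∧
      expect (margSnd ρ) (fun v => g v ^ 2) = 1 ∧
      t = ∑ x : U × V, ρ x * (f x.1 * g x.2) }

/-- Tensor product of two bipartite distributions. -/
def tensor (ρ : U × V → ℝ) (σ : X × Y → ℝ) : (U × X) × (V × Y) → ℝ :=
  fun p => ρ (p.1.1, p.2.1) * σ (p.1.2, p.2.2)

/-- Tensor product of a family of bipartite distributions. -/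
def tensorPi {n : ℕ} {U V : Fin n → Type*} (ρ : ∀ i, U i × V i → ℝ) :
    (∀ i, U i) × (∀ i, V i) → ℝ :=
  fun p => ∏ i, ρ i (p.1 i, p.2 i)

/-- The distribution of `ℓ` i.i.d. samples from a bipartite distribution `ρ`. -/
def iid (ρ : U × V → ℝ) (ℓ : ℕ) : (Fin ℓ → U) × (Fin ℓ → V) → ℝ :=
  fun p => ∏ i, ρ (p.1 i, p.2 i)

/-- Agreement complexity of `ρ` at success probability `p`. -/
noncomputable def agr [Fintype U] [Fintype V] (ρ : U × V → ℝ) (p : ℝ) : ℝ :=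
  sInf { c : ℝ | ∃ (ℓ : ℕ) (f : (Fin ℓ → U) → ℝ) (g : (Fin ℓ → V) → ℝ),
      (∀ x, f x ∈ Set.Icc (0:ℝ) 1) ∧ (∀ y, g y ∈ Set.Icc (0:ℝ) 1) ∧
      p ≤ (∑ x : (Fin ℓ → U) × (Fin ℓ → V), iid ρ ℓ x * (f x.1 * g x.2)) ∧
      c = (∑ x : (Fin ℓ → U) × (Fin ℓ → V), iid ρ ℓ x * f x.1)
        + (∑ x : (Fin ℓ → U) × (Fin ℓ → V), iid ρ ℓ x * g x.2) }

/-- There is a `p`-collision protocol for `ρ` with domain size `n` and output size at most `k`.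
    The players may use private randomness (uniform over `Fin sA`, `Fin sB` weighted by
    distributions `μA`, `μB`, independent of everything else). -/
def ColLE [Fintype U] [Fintype V] (ρ : U × V → ℝ) (n : ℕ) (p : ℝ) (k : ℕ) : Prop :=
  ∃ (ℓ sA sB : ℕ) (μA : Fin sA → ℝ) (μB : Fin sB → ℝ)
    (A : (Fin ℓ → U) → Fin sA → Finset (Fin n))
    (B : (Fin ℓ → V) → Fin sB → Finset (Fin n)),
    IsDist μA ∧ IsDist μB ∧
    (∀ i : Fin n, p ≤ ∑ x : (Fin ℓ → U) × (Fin ℓ → V), ∑ rA, ∑ rB,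
        iid ρ ℓ x * (μA rA * μB rB) *
          (if i ∈ A x.1 rA ∧ i ∈ B x.2 rB then (1:ℝ) else 0)) ∧
    (∀ (x : (Fin ℓ → U) × (Fin ℓ → V)) (rA : Fin sA),
        0 < iid ρ ℓ x → 0 < μA rA → (A x.1 rA).card ≤ k) ∧
    (∀ (x : (Fin ℓ → U) × (Fin ℓ → V)) (rB : Fin sB),
        0 < iid ρ ℓ x → 0 < μB rB → (B x.2 rB).card ≤ k)

/-- Collision complexity `col_ρ(n, p)`, valued in `ℕ∞` (`sInf ∅ = ⊤`). -/
noncomputable def col [Fintype U] [Fintype V] (ρ : U × V → ℝ) (n : ℕ) (p : ℝ) : ℕ∞ :=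
  sInf { k : ℕ∞ | ∃ m : ℕ, k = (m : ℕ∞) ∧ ColLE ρ n p m }

/-- Base-2 Shannon entropy of a finitely supported distribution. -/
noncomputable def ent2 {α : Type*} [Fintype α] (μ : α → ℝ) : ℝ :=
  ∑ a, -(μ a * Real.logb 2 (μ a))

open Classical in
/-- Probability of an event under `μ`. -/
noncomputable def prEvent {Ω : Type*} [Fintype Ω] (μ : Ω → ℝ) (P : Ω → Prop) : ℝ :=
  ∑ ω, if P ω then μ ω else 0

/-- The distribution of a random variable `Z` conditioned on an event `P`. -/
noncomputable def condDist {Ω α : Type*} [Fintype Ω] (μ : Ω → ℝ) (Z : Ω → α)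
    (P : Ω → Prop) : α → ℝ :=
  fun a => prEvent μ (fun ω => Z ω = a ∧ P ω) / prEvent μ P

/-- The `L^r(μ)`-norm of a complex-valued function on a finite probability space. -/
noncomputable def lnorm {α : Type*} [Fintype α] (μ : α → ℝ) (r : ℝ) (h : α → ℂ) : ℝ :=
  (∑ a, μ a * ‖h a‖ ^ r) ^ (1 / r)

/-- The conditional-expectation operator `T_ρ` of a bipartite distribution. -/
noncomputable def condOp [Fintype U] [Fintype V] (ρ : U × V → ℝ) (f : U → ℂ) : V → ℂ :=
  fun v => ∑ u, ((ρ (u, v) / margSnd ρ v : ℝ) : ℂ) * f u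

/-- `ρ` is `q`-to-`p` hypercontractive. -/
def Hyper [Fintype U] [Fintype V] (ρ : U × V → ℝ) (q p : ℝ) : Prop :=
  ∀ f : U → ℂ, lnorm (margSnd ρ) q (condOp ρ f) ≤ lnorm (margFst ρ) p f

/-- Inner product over 𝔽₂. -/
def ipF2 {m : ℕ} (u v : Fin m → ZMod 2) : ZMod 2 := ∑ i, u i * v i

/-- `σ_{m,b}`: uniform distribution on pairs `(u,v) ∈ 𝔽₂^m × 𝔽₂^m` with `u·v = b`. -/
noncomputable def sigmaIP (m : ℕ) (b : ZMod 2) :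
    ((Fin m → ZMod 2) × (Fin m → ZMod 2)) → ℝ :=
  fun p => if ipF2 p.1 p.2 = b then
      (((Finset.univ.filter
        (fun q : (Fin m → ZMod 2) × (Fin m → ZMod 2) => ipF2 q.1 q.2 = b)).card : ℝ))⁻¹
    else 0

/-- `ρ_disj`: uniform distribution on `{(0,0),(0,1),(1,0)} ⊆ {0,1} × {0,1}`
    (with `false = 0`, `true = 1`). -/
noncomputable def rhoDisj : Bool × Bool → ℝ :=
  fun x => if x = (true, true) then 0 else 1/3

/-!
Run `m` copies of a `p`-collision protocol on disjoint blocks of samples with independent private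
coins, and let each player output the union of its `m` outputs. The outputs grow by a factor of at
most `m`, and the players collide on `i` whenever some run does; as the runs are independent, this
happens with probability at least `1 - (1 - p) ^ m`.
-/

open Finset

theorem pos_of_prod_pos {ι R : Type*} [Fintype ι] [CommMonoidWithZero R] [PartialOrder R]
    [Nontrivial R] [NoZeroDivisors R] {f : ι → R} (hf : ∀ i, 0 ≤ f i) (h : 0 < ∏ i, f i)
    (i : ι) : 0 < f i :=
  (hf i).lt_of_ne' (prod_ne_zero_iff.1 h.ne' i (mem_univ i))

theorem sum_sum_sum_eq_sum_prod {α β γ M : Type*} [Fintype α] [Fintype β] [Fintype γ]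
    [AddCommMonoid M] (f : α → β → γ → M) :
    ∑ a, ∑ b, ∑ c, f a b c = ∑ z : α × β × γ, f z.1 z.2.1 z.2.2 := by
  rw [Fintype.sum_prod_type]
  exact sum_congr rfl fun a _ => (Fintype.sum_prod_type' (f a)).symm

section Repetition

variable {Ω : Type*} [Fintype Ω]

theorem sum_pi_prod_mul_indicator_exists (w : Ω → ℝ) (hw : ∑ a, w a = 1) (E : Ω → Prop)
    [DecidablePred E] (m : ℕ) :
    ∑ ω : Fin m → Ω, (∏ j, w (ω j)) * (if ∃ j, E (ω j) then 1 else 0) =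
      1 - (1 - ∑ a, w a * if E a then 1 else 0) ^ m := by
  have hind : ∀ ω : Fin m → Ω,
      (if ∃ j, E (ω j) then 1 else 0 : ℝ) = 1 - ∏ j, (1 - if E (ω j) then 1 else 0) := by
    intro ω
    split_ifs with h
    · obtain ⟨j, hj⟩ := h
      rw [prod_eq_zero (mem_univ j) (by simp [hj]), sub_zero]
    · rw [prod_eq_one fun j _ => by simp [not_exists.1 h j], sub_self]
  have hcompl :
      1 - ∑ a, w a * (if E a then 1 else 0) = ∑ a, w a * (1 - if E a then 1 else 0) := by
    simp only [mul_sub, mul_one, sum_sub_distrib, hw]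
  calc ∑ ω : Fin m → Ω, (∏ j, w (ω j)) * (if ∃ j, E (ω j) then 1 else 0)
      = ∑ ω : Fin m → Ω,
          (∏ j, w (ω j) - ∏ j, w (ω j) * (1 - if E (ω j) then 1 else 0)) := by
        refine sum_congr rfl fun ω _ => ?_
        rw [hind, mul_sub, mul_one, prod_mul_distrib]
    _ = (∑ a, w a) ^ m - (∑ a, w a * (1 - if E a then 1 else 0)) ^ m := by
        rw [sum_sub_distrib, Fintype.sum_pow, Fintype.sum_pow]
    _ = 1 - (1 - ∑ a, w a * if E a then 1 else 0) ^ m := by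
        rw [hw, one_pow, hcompl]

end Repetition

section Distributions

variable {α β : Type*} [Fintype α] [Fintype β] {μ : α → ℝ}

theorem IsDist.comp_equiv (hμ : IsDist μ) (e : β ≃ α) : IsDist (μ ∘ e) :=
  ⟨fun _ => hμ.1 _, by rw [← hμ.2]; exact e.sum_comp μ⟩

theorem IsDist.pi (hμ : IsDist μ) (m : ℕ) : IsDist fun ω : Fin m → α => ∏ j, μ (ω j) :=
  ⟨fun _ => prod_nonneg fun _ _ => hμ.1 _, by rw [← Fintype.sum_pow, hμ.2, one_pow]⟩

theorem IsDist.prod {ν : β → ℝ} (hμ : IsDist μ) (hν : IsDist ν) :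
    IsDist fun z : α × β => μ z.1 * ν z.2 :=
  ⟨fun _ => mul_nonneg (hμ.1 _) (hν.1 _), by
    rw [Fintype.sum_prod_type]; dsimp only; rw [← sum_mul_sum, hμ.2, hν.2, one_mul]⟩

theorem IsDist.iid {ρ : U × V → ℝ} [Fintype U] [Fintype V] (hρ : IsDist ρ) (ℓ : ℕ) :
    IsDist (iid ρ ℓ) :=
  (hρ.pi ℓ).comp_equiv (Equiv.arrowProdEquivProdArrow _ _ _).symm

end Distributions

def blocks (α : Type*) (m ℓ : ℕ) : (Fin (m * ℓ) → α) ≃ (Fin m → Fin ℓ → α) :=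
  (Equiv.arrowCongr finProdFinEquiv.symm (Equiv.refl α)).trans (Equiv.curry _ _ _)

theorem iid_mul_eq_prod_blocks (ρ : U × V → ℝ) (m ℓ : ℕ)
    (x : (Fin (m * ℓ) → U) × (Fin (m * ℓ) → V)) :
    iid ρ (m * ℓ) x = ∏ j, iid ρ ℓ (blocks U m ℓ x.1 j, blocks V m ℓ x.2 j) := by
  rw [iid, ← finProdFinEquiv.prod_comp, Fintype.prod_prod_type]
  rfl

def runsEquiv (U V : Type*) (m ℓ sA sB : ℕ) :
    ((Fin (m * ℓ) → U) × (Fin (m * ℓ) → V)) × Fin (sA ^ m) × Fin (sB ^ m) ≃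
      (Fin m → ((Fin ℓ → U) × (Fin ℓ → V)) × Fin sA × Fin sB) :=
  ((((blocks U m ℓ).prodCongr (blocks V m ℓ)).trans
      (Equiv.arrowProdEquivProdArrow _ _ _).symm).prodCongr
    ((finFunctionFinEquiv.symm.prodCongr finFunctionFinEquiv.symm).trans
      (Equiv.arrowProdEquivProdArrow _ _ _).symm)).trans
    (Equiv.arrowProdEquivProdArrow _ _ _).symm

section Runs

variable [Fintype U] [Fintype V] {n ℓ sA sB : ℕ}

def collisionProb (ρ : U × V → ℝ) (ℓ : ℕ) (μA : Fin sA → ℝ) (μB : Fin sB → ℝ)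
    (A : (Fin ℓ → U) → Fin sA → Finset (Fin n))
    (B : (Fin ℓ → V) → Fin sB → Finset (Fin n))
    (i : Fin n) : ℝ :=
  ∑ x : (Fin ℓ → U) × (Fin ℓ → V), ∑ rA, ∑ rB,
    iid ρ ℓ x * (μA rA * μB rB) * (if i ∈ A x.1 rA ∧ i ∈ B x.2 rB then 1 else 0)

def coinsOfRuns {s : ℕ} (m : ℕ) (μ : Fin s → ℝ) : Fin (s ^ m) → ℝ :=
  fun r => ∏ j, μ (finFunctionFinEquiv.symm r j)

def unionOfRuns {X : Type*} {s : ℕ} (m : ℕ) (A : (Fin ℓ → X) → Fin s → Finset (Fin n)) :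
    (Fin (m * ℓ) → X) → Fin (s ^ m) → Finset (Fin n) :=
  fun x r => univ.biUnion fun j => A (blocks X m ℓ x j) (finFunctionFinEquiv.symm r j)

variable {ρ : U × V → ℝ} {μA : Fin sA → ℝ} {μB : Fin sB → ℝ}
  {A : (Fin ℓ → U) → Fin sA → Finset (Fin n)}
  {B : (Fin ℓ → V) → Fin sB → Finset (Fin n)}

theorem collisionProb_le_one (hρ : IsDist ρ) (hμA : IsDist μA) (hμB : IsDist μB) (i : Fin n) :
    collisionProb ρ ℓ μA μB A B i ≤ 1 := by
  have hw := (hρ.iid ℓ).prod (hμA.prod hμB)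
  rw [collisionProb, sum_sum_sum_eq_sum_prod]
  refine (sum_le_sum fun z _ => ?_).trans_eq hw.2
  exact mul_le_of_le_one_right (hw.1 z) (by split_ifs <;> norm_num)

/-- The union protocol collides on `i` as soon as one of the `m` runs does. -/
theorem one_sub_pow_le_collisionProb_unionOfRuns (hρ : IsDist ρ) (hμA : IsDist μA)
    (hμB : IsDist μB) (m : ℕ) (i : Fin n) :
    1 - (1 - collisionProb ρ ℓ μA μB A B i) ^ m ≤
      collisionProb ρ (m * ℓ) (coinsOfRuns m μA) (coinsOfRuns m μB) (unionOfRuns m A)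
        (unionOfRuns m B) i := by
  set w : ((Fin ℓ → U) × (Fin ℓ → V)) × Fin sA × Fin sB → ℝ :=
    fun z => iid ρ ℓ z.1 * (μA z.2.1 * μB z.2.2)
  have hw : IsDist w := (hρ.iid ℓ).prod (hμA.prod hμB)
  set hit : ((Fin ℓ → U) × (Fin ℓ → V)) × Fin sA × Fin sB → Prop :=
    fun z => i ∈ A z.1.1 z.2.1 ∧ i ∈ B z.1.2 z.2.2
  set e := runsEquiv U V m ℓ sA sB
  rw [collisionProb, collisionProb, sum_sum_sum_eq_sum_prod, sum_sum_sum_eq_sum_prod,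
    ← sum_pi_prod_mul_indicator_exists w hw.2 hit m, ← e.sum_comp]
  refine sum_le_sum fun z _ => ?_
  obtain ⟨x, rA, rB⟩ := z
  have hweight : ∏ j, w (e (x, rA, rB) j) =
      iid ρ (m * ℓ) x * (coinsOfRuns m μA rA * coinsOfRuns m μB rB) := by
    rw [iid_mul_eq_prod_blocks, coinsOfRuns, coinsOfRuns, ← prod_mul_distrib,
      ← prod_mul_distrib]
    rfl
  rw [← hweight]
  refine mul_le_mul_of_nonneg_left ?_ (prod_nonneg fun j _ => hw.1 _)
  split_ifs with hsome hunion <;> try norm_num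
  obtain ⟨j, hA, hB⟩ := hsome
  exact hunion ⟨mem_biUnion.2 ⟨j, mem_univ _, hA⟩, mem_biUnion.2 ⟨j, mem_univ _, hB⟩⟩

end Runs

theorem ColLE.amplify [Fintype U] [Fintype V] {ρ : U × V → ℝ} (hρ : IsDist ρ) {n : ℕ}
    {p : ℝ} {k : ℕ} (h : ColLE ρ n p k) (m : ℕ) : ColLE ρ n (1 - (1 - p) ^ m) (m * k) := by
  obtain ⟨ℓ, sA, sB, μA, μB, A, B, hμA, hμB, hsucc, hcardA, hcardB⟩ := h
  have hblock : ∀ x j, 0 < iid ρ (m * ℓ) x →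
      0 < iid ρ ℓ (blocks U m ℓ x.1 j, blocks V m ℓ x.2 j) := fun x j hx =>
    pos_of_prod_pos (fun _ => (hρ.iid ℓ).1 _) (hx.trans_eq (iid_mul_eq_prod_blocks ρ m ℓ x)) j
  refine ⟨m * ℓ, sA ^ m, sB ^ m, coinsOfRuns m μA, coinsOfRuns m μB, unionOfRuns m A,
    unionOfRuns m B, (hμA.pi m).comp_equiv _, (hμB.pi m).comp_equiv _, fun i => ?_, ?_, ?_⟩
  · calc 1 - (1 - p) ^ m ≤ 1 - (1 - collisionProb ρ ℓ μA μB A B i) ^ m :=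
          sub_le_sub_left (pow_le_pow_left₀ (sub_nonneg.2 (collisionProb_le_one hρ hμA hμB i))
            (sub_le_sub_left (hsucc i) 1) m) 1
      _ ≤ _ := one_sub_pow_le_collisionProb_unionOfRuns hρ hμA hμB m i
  · intro x r hx hr
    refine (card_biUnion_le_card_mul _ _ k fun j _ =>
      hcardA _ _ (hblock x j hx) (pos_of_prod_pos (fun _ => hμA.1 _) hr j)).trans_eq ?_
    rw [card_univ, Fintype.card_fin]
  · intro x r hx hr
    refine (card_biUnion_le_card_mul _ _ k fun j _ =>
      hcardB _ _ (hblock x j hx) (pos_of_prod_pos (fun _ => hμB.1 _) hr j)).trans_eq ?_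
    rw [card_univ, Fintype.card_fin]

section Col

variable [Fintype U] [Fintype V] {ρ : U × V → ℝ} {n : ℕ} {p : ℝ}

theorem col_le_of_colLE {k : ℕ} (h : ColLE ρ n p k) : col ρ n p ≤ k :=
  sInf_le ⟨k, rfl, h⟩

theorem exists_colLE_of_col_ne_top (h : col ρ n p ≠ ⊤) :
    ∃ k : ℕ, col ρ n p = k ∧ ColLE ρ n p k := by
  have hne : {k : ℕ∞ | ∃ m : ℕ, k = m ∧ ColLE ρ n p m}.Nonempty :=
    Set.nonempty_iff_ne_empty.2 fun hempty => h (by rw [col, hempty, sInf_empty])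
  exact csInf_mem hne

end Col

theorem stmt4_general {U V : Type} [Fintype U] [Fintype V]
    (ρ : U × V → ℝ) (hρ : IsDist ρ) (n : ℕ)
    (p : ℝ) (m : ℕ) (hm : 1 ≤ m) :
    col ρ n (1 - (1 - p) ^ m) ≤ (m : ℕ∞) * col ρ n p := by
  by_cases htop : col ρ n p = ⊤
  · rw [htop, ENat.mul_top (by exact_mod_cast (by omega : m ≠ 0))]
    exact le_top
  obtain ⟨k, hk, hcol⟩ := exists_colLE_of_col_ne_top htop
  rw [hk, ← Nat.cast_mul]
  exact col_le_of_colLE (hcol.amplify hρ m)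

theorem stmt4 {U V : Type} [Fintype U] [Fintype V] [Nonempty U] [Nonempty V]
    (ρ : U × V → ℝ) (hρ : IsDist ρ) (n : ℕ) (hn : 1 ≤ n)
    (p : ℝ) (hp0 : 0 ≤ p) (hp1 : p ≤ 1) (m : ℕ) (hm : 1 ≤ m) :
    col ρ n (1 - (1 - p) ^ m) ≤ (m : ℕ∞) * col ρ n p :=
  stmt4_general ρ hρ n p m hm

end SR
end

section
/- Let ρ be a bipartite distribution on U × V, let n ≥ 1, and let K be a real number with K > agr_ρ(1/n). Then there exists a (possibly randomized) pair of maps (ℓ, A, B), with A from U^ℓ to subsets of [n] and B from V^ℓ to subsets of [n], such that: (i) the output size is at most 3nK + 16, i.e., always |A(u⃗)| ≤ 3nK + 16 and |B(v⃗)| ≤ 3nK + 16; (ii) Pr_{(u⃗,v⃗)∼ρ^⊗ℓ}[A(u⃗) ∩ B(v⃗) = ∅] < 1/e + 1/2; and (iii) the distribution on [n] obtained by, conditioned on A(u⃗) ∩ B(v⃗) ≠ ∅, choosing a uniformly random element of A(u⃗) ∩ B(v⃗), is exactly the uniform distribution on [n]. -/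
open scoped BigOperators ENNReal

namespace SR

variable {U V X Y : Type*}

/-!
Take an agreement protocol `(ℓ, f, g)` with success probability at least `1/n` and cost below
`K`, and run it on `n` independent blocks of `ℓ` samples. In each block each player tosses a
private coin whose bias is its acceptance probability rounded up to a multiple of `1/n`, and it
outputs the set of blocks where its coin came up, or `∅` if that set has more than `3 n p + 8`
elements, `p ≤ K + 1/n` being the probability that its coin comes up. Both coins of a block come
up with probability `q ≥ 1/n`, so the outputs are disjoint with probability at most
`(1 - q)^n + 2/64 ≤ 1/e + 1/32`, the two cut-offs being controlled by Chebyshev's inequality.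
Rotating the blocks preserves the law of the coin pattern, hence a uniform element of the
intersection of the outputs is uniform on `[n]`.
-/

open Finset

section ProductWeight

variable {ι T : Type*} [Fintype ι] [DecidableEq ι] [Fintype T] {π : T → ℝ}

theorem sum_prod_mul_prod (h : ι → T → ℝ) :
    ∑ c : ι → T, ∏ j, π (c j) * h j (c j) = ∏ j, expect π (h j) :=
  (Fintype.prod_sum fun j (t : T) => π t * h j t).symm

theorem sum_prod_mul_apply (hπ : ∑ t, π t = 1) (i : ι) (h : T → ℝ) :
    ∑ c : ι → T, (∏ j, π (c j)) * h (c i) = expect π h := by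
  have := sum_prod_mul_prod (π := π) fun j t => if j = i then h t else 1
  simp_rw [prod_mul_distrib, Fintype.prod_ite_eq'] at this
  rw [this, prod_eq_single i (fun j _ hj => by simp [hj, expect, hπ]) (by simp)]
  simp

theorem sum_prod_mul_apply_mul_apply (hπ : ∑ t, π t = 1) {i i' : ι} (hi : i ≠ i')
    (h h' : T → ℝ) :
    ∑ c : ι → T, (∏ j, π (c j)) * (h (c i) * h' (c i')) = expect π h * expect π h' := by
  have := sum_prod_mul_prod (π := π) fun j t =>
    (if j = i then h t else 1) * (if j = i' then h' t else 1)
  simp_rw [prod_mul_distrib, Fintype.prod_ite_eq'] at this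
  rw [this, prod_eq_mul_of_mem i i' (mem_univ _) (mem_univ _) hi
    fun j _ hj => by simp [hj.1, hj.2, expect, hπ]]
  simp [hi, hi.symm]

theorem sum_prod_mul_ite_forall {n : ℕ} (P : T → Prop) [DecidablePred P] :
    ∑ c : Fin n → T, (∏ j, π (c j)) * (if ∀ j, P (c j) then 1 else 0) =
      expect π (fun t => if P t then 1 else 0) ^ n := by
  have := sum_prod_mul_prod (ι := Fin n) (π := π) fun _ t => if P t then 1 else 0
  simp_rw [prod_mul_distrib, prod_boole, mem_univ, true_imp_iff, prod_const, card_univ,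
    Fintype.card_fin] at this
  exact this

theorem sum_prod_mul_sum_sq (hπ : ∑ t, π t = 1) {h : T → ℝ} (hh : expect π h = 0) :
    ∑ c : ι → T, (∏ j, π (c j)) * (∑ j, h (c j)) ^ 2 =
      Fintype.card ι * expect π (fun t => h t ^ 2) := by
  have hjk (j k : ι) : ∑ c : ι → T, (∏ j, π (c j)) * (h (c j) * h (c k)) =
      if j = k then expect π (fun t => h t ^ 2) else 0 := by
    split_ifs with hjk
    · subst hjk
      simp_rw [← sq]
      exact sum_prod_mul_apply hπ j fun t => h t ^ 2
    · rw [sum_prod_mul_apply_mul_apply hπ hjk, hh, zero_mul]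
  calc ∑ c : ι → T, (∏ j, π (c j)) * (∑ j, h (c j)) ^ 2
      = ∑ j, ∑ k, ∑ c : ι → T, (∏ j, π (c j)) * (h (c j) * h (c k)) := by
        simp_rw [sq, sum_mul_sum, mul_sum]
        rw [sum_comm]
        exact sum_congr rfl fun j _ => sum_comm
    _ = _ := by simp_rw [hjk, sum_ite_eq, if_pos (mem_univ _), sum_const, card_univ, nsmul_eq_mul]

end ProductWeight

section Tail

variable {T : Type*} [Fintype T] {π : T → ℝ} {n : ℕ}

theorem expect_nonneg (hπ : IsDist π) {h : T → ℝ} (hh : ∀ t, 0 ≤ h t) : 0 ≤ expect π h :=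
  sum_nonneg fun t _ => mul_nonneg (hπ.1 t) (hh t)

theorem expect_ite_le_one (hπ : IsDist π) (P : T → Prop) [DecidablePred P] :
    expect π (fun t => if P t then 1 else 0) ≤ 1 :=
  calc expect π (fun t => if P t then 1 else 0) ≤ ∑ t, π t :=
        sum_le_sum fun t _ => by dsimp only; split_ifs <;> simp [hπ.1 t]
    _ = 1 := hπ.2

theorem isDist_const_inv {m : ℕ} (hm : m ≠ 0) : IsDist fun _ : Fin m => (m : ℝ)⁻¹ :=
  ⟨fun _ => by positivity, by simp [hm]⟩

theorem expect_sub_expect (hπ : ∑ t, π t = 1) (h : T → ℝ) :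
    expect π (fun t => h t - expect π h) = 0 := by
  simp only [expect, mul_sub, sum_sub_distrib, ← sum_mul, hπ, one_mul, sub_self]

theorem expect_ite_sub_sq_le (hπ : IsDist π) (P : T → Prop) [DecidablePred P] :
    expect π (fun t => ((if P t then 1 else 0) - expect π fun t => if P t then 1 else 0) ^ 2) ≤
      expect π fun t => if P t then 1 else 0 := by
  set p := expect π fun t => if P t then 1 else 0
  have hsq (t : T) :
      ((if P t then 1 else 0) - p) ^ 2 = (1 - 2 * p) * (if P t then 1 else 0) + p ^ 2 := by
    split_ifs <;> ring
  have hexp : expect π (fun t => ((if P t then 1 else 0) - p) ^ 2) = (1 - 2 * p) * p + p ^ 2 := by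
    simp only [expect, hsq, mul_add, sum_add_distrib, ← sum_mul, hπ.2, one_mul,
      mul_left_comm _ (1 - 2 * p), ← mul_sum]
    rfl
  nlinarith [expect_nonneg hπ fun t => (by positivity : (0 : ℝ) ≤ if P t then 1 else 0)]

/-- Chebyshev: the count has mean `n * p` and variance at most `n * p`, where `p` is the
probability of `P`. -/
theorem sum_prod_mul_ite_lt_card_le (hπ : IsDist π) (P : T → Prop) [DecidablePred P] :
    ∑ c : Fin n → T, (∏ j, π (c j)) *
      (if 3 * n * expect π (fun t => if P t then 1 else 0) + 8 < (#{j | P (c j)} : ℝ)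
        then 1 else 0) ≤ 1 / 64 := by
  set p := expect π fun t => if P t then 1 else 0
  set h : T → ℝ := fun t => (if P t then 1 else 0) - p
  have hp : 0 ≤ p := expect_nonneg hπ fun t => by positivity
  have hh : expect π h = 0 := expect_sub_expect hπ.2 _
  have hcard (c : Fin n → T) : (#{j | P (c j)} : ℝ) - n * p = ∑ j, h (c j) := by
    rw [natCast_card_filter]
    simp only [h, sum_sub_distrib, sum_const, card_univ, Fintype.card_fin, nsmul_eq_mul]
  have hδ : 0 < 2 * (n * p) + 8 := by positivity
  have hpoint (c : Fin n → T) :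
      (if 3 * n * p + 8 < (#{j | P (c j)} : ℝ) then 1 else 0) ≤
        (∑ j, h (c j)) ^ 2 / (2 * (n * p) + 8) ^ 2 := by
    split_ifs with hc
    · rw [le_div_iff₀ (by positivity), one_mul, ← hcard]
      exact pow_le_pow_left₀ hδ.le (by linarith) 2
    · positivity
  calc _ ≤ ∑ c : Fin n → T, (∏ j, π (c j)) * ((∑ j, h (c j)) ^ 2 / (2 * (n * p) + 8) ^ 2) :=
        sum_le_sum fun c _ =>
          mul_le_mul_of_nonneg_left (hpoint c) (prod_nonneg fun j _ => hπ.1 _)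
    _ = n * expect π (fun t => h t ^ 2) / (2 * (n * p) + 8) ^ 2 := by
        simp_rw [mul_div_assoc', ← sum_div, sum_prod_mul_sum_sq hπ.2 hh, Fintype.card_fin]
    _ ≤ n * p / (2 * (n * p) + 8) ^ 2 := by gcongr; exact expect_ite_sub_sq_le hπ P
    _ ≤ 1 / 64 := by
        rw [div_le_div_iff₀ (by positivity) (by norm_num)]
        nlinarith [sq_nonneg (n * p - 4)]

theorem one_sub_pow_le_exp_neg_one {q : ℝ} (hn : 1 ≤ n) (hq : 1 / n ≤ q) (hq1 : q ≤ 1) :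
    (1 - q) ^ n ≤ (Real.exp 1)⁻¹ :=
  calc (1 - q) ^ n ≤ (1 - 1 / n) ^ n := pow_le_pow_left₀ (by linarith) (by linarith) n
    _ ≤ (Real.exp 1)⁻¹ := by
      simpa [Real.exp_neg] using Real.one_sub_div_pow_le_exp_neg (t := 1) (by exact_mod_cast hn)

end Tail

section MapWeight

variable {Ω T : Type*} [Fintype Ω] [DecidableEq T]

def mapWeight (κ : Ω → T) (w : Ω → ℝ) (t : T) : ℝ :=
  ∑ ω, if κ ω = t then w ω else 0

variable [Fintype T] (κ : Ω → T) (w : Ω → ℝ)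

theorem expect_mapWeight (φ : T → ℝ) : expect (mapWeight κ w) φ = expect w (φ ∘ κ) := by
  simp only [expect, mapWeight, sum_mul, ite_mul, zero_mul]
  rw [sum_comm]
  exact sum_congr rfl fun ω _ => by rw [sum_ite_eq, if_pos (mem_univ _)]; rfl

theorem isDist_mapWeight (hw : IsDist w) : IsDist (mapWeight κ w) := by
  refine ⟨fun t => sum_nonneg fun ω _ => ?_, ?_⟩
  · split_ifs
    exacts [hw.1 ω, le_rfl]
  · have h := expect_mapWeight κ w 1
    simp only [expect, Pi.one_apply, Function.comp_apply, mul_one] at h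
    rw [h, hw.2]

theorem sum_prod_mul_comp_eq_sum_prod_mapWeight {ι : Type*} [Fintype ι] [DecidableEq ι]
    (G : (ι → T) → ℝ) :
    ∑ ω : ι → Ω, (∏ j, w (ω j)) * G (κ ∘ ω) =
      ∑ c : ι → T, (∏ j, mapWeight κ w (c j)) * G c := by
  have hc (c : ι → T) : ∏ j, mapWeight κ w (c j) =
      ∑ ω : ι → Ω, if κ ∘ ω = c then ∏ j, w (ω j) else 0 := by
    simp_rw [mapWeight, Fintype.prod_sum, prod_ite_zero, mem_univ, true_imp_iff, funext_iff,
      Function.comp_apply]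
  simp_rw [hc, sum_mul, ite_mul, zero_mul]
  rw [sum_comm]
  refine sum_congr rfl fun ω _ => ?_
  rw [sum_ite_eq, if_pos (mem_univ _)]

end MapWeight

section Cutoff

variable {α : Type*}

noncomputable def cutoff (τ : ℝ) (s : Finset α) : Finset α :=
  if (#s : ℝ) ≤ τ then s else ∅

theorem card_cutoff_le {τ : ℝ} (hτ : 0 ≤ τ) (s : Finset α) : (#(cutoff τ s) : ℝ) ≤ τ := by
  unfold cutoff
  split_ifs with h
  exacts [h, by simpa using hτ]

theorem cutoff_map {β : Type*} (τ : ℝ) (s : Finset α) (e : α ↪ β) :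
    cutoff τ (s.map e) = (cutoff τ s).map e := by
  unfold cutoff
  rw [card_map]
  split_ifs <;> simp

theorem card_cutoff_le_of_le {n : ℕ} {p K : ℝ} (hp0 : 0 ≤ p) (hp : p ≤ K + 1 / n)
    (s : Finset α) : (#(cutoff (3 * n * p + 8) s) : ℝ) ≤ 3 * n * K + 16 := by
  refine (card_cutoff_le (by positivity) s).trans ?_
  have : (n : ℝ) * (1 / n) ≤ 1 := by
    rcases eq_or_ne (n : ℝ) 0 with h | h <;> simp [h]
  nlinarith [mul_le_mul_of_nonneg_left hp (by positivity : (0 : ℝ) ≤ 3 * n)]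

theorem mem_cutoff {τ : ℝ} {s : Finset α} {a : α} : a ∈ cutoff τ s ↔ (#s : ℝ) ≤ τ ∧ a ∈ s := by
  unfold cutoff
  split_ifs with h <;> simp [h]

theorem sum_ite_mem_inv_card [Fintype α] [DecidableEq α] (s : Finset α) :
    ∑ a, (if a ∈ s then (#s : ℝ)⁻¹ else 0) = if s.Nonempty then 1 else 0 := by
  rw [sum_ite_mem, univ_inter, sum_const, nsmul_eq_mul]
  split_ifs with h
  · exact mul_inv_cancel₀ (by exact_mod_cast h.card_pos.ne')
  · simp [not_nonempty_iff_eq_empty.1 h]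

/-- A uniform element of a random subset of `Fin n` with rotation invariant law is uniform. -/
theorem sum_mul_ite_mem_inv_card_eq {Ω : Type*} [Fintype Ω] {n : ℕ} [NeZero n]
    (W : Ω → ℝ) (I : Ω → Finset (Fin n)) (σ : Fin n → Ω ≃ Ω) (hW : ∀ k ω, W (σ k ω) = W ω)
    (hI : ∀ k ω, I (σ k ω) = (I ω).map (Equiv.addRight k).toEmbedding) (i : Fin n) :
    ∑ ω, W ω * (if i ∈ I ω then (#(I ω) : ℝ)⁻¹ else 0) =
      (∑ ω, W ω * if (I ω).Nonempty then 1 else 0) / n := by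
  set F : Fin n → ℝ := fun i => ∑ ω, W ω * if i ∈ I ω then (#(I ω) : ℝ)⁻¹ else 0
  have hF (k : Fin n) : F (i + k) = F i := by
    simp only [F]
    rw [← (σ k).sum_comp]
    simp [hW, hI, mem_map_equiv]
  have hsum : ∑ j, F j = ∑ ω, W ω * if (I ω).Nonempty then 1 else 0 := by
    simp only [F]
    rw [sum_comm]
    refine sum_congr rfl fun ω _ => ?_
    rw [← mul_sum, sum_ite_mem_inv_card]
  rw [← hsum, sum_congr rfl fun j _ => (add_sub_cancel i j ▸ hF (j - i) :), sum_const,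
    card_univ, Fintype.card_fin, nsmul_eq_mul, mul_div_cancel_left₀ _ (NeZero.ne _)]

end Cutoff

section CappedInter

variable {T : Type*} {n : ℕ} (τP τQ : ℝ) (P Q : T → Prop) [DecidablePred P]
  [DecidablePred Q]

noncomputable def cappedInter (c : Fin n → T) : Finset (Fin n) :=
  cutoff τP {j | P (c j)} ∩ cutoff τQ {j | Q (c j)}

theorem cappedInter_comp_symm (e : Fin n ≃ Fin n) (c : Fin n → T) :
    cappedInter τP τQ P Q (c ∘ e.symm) = (cappedInter τP τQ P Q c).map e.toEmbedding := by
  have hfilter (R : T → Prop) [DecidablePred R] :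
      ({j | R ((c ∘ e.symm) j)} : Finset (Fin n)) =
        ({j | R (c j)} : Finset (Fin n)).map e.toEmbedding := by
    ext j
    simp [mem_map_equiv]
  simp only [cappedInter, hfilter, cutoff_map, map_inter]

theorem sum_prod_mul_ite_cappedInter_eq_empty_le [Fintype T] {π : T → ℝ} (hπ : IsDist π) :
    ∑ c : Fin n → T, (∏ j, π (c j)) *
      (if cappedInter (3 * n * expect π (fun t => if P t then 1 else 0) + 8)
          (3 * n * expect π (fun t => if Q t then 1 else 0) + 8) P Q c = ∅ then 1 else 0) ≤
      (1 - expect π (fun t => if P t ∧ Q t then 1 else 0)) ^ n + 1 / 32 := by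
  set τP := 3 * n * expect π (fun t => if P t then 1 else 0) + 8
  set τQ := 3 * n * expect π (fun t => if Q t then 1 else 0) + 8
  have hpoint (c : Fin n → T) :
      (if cappedInter τP τQ P Q c = ∅ then 1 else 0 : ℝ) ≤
        (if ∀ j, ¬(P (c j) ∧ Q (c j)) then 1 else 0) +
          ((if τP < (#{j | P (c j)} : ℝ) then 1 else 0) +
            (if τQ < (#{j | Q (c j)} : ℝ) then 1 else 0)) := by
    have himp : cappedInter τP τQ P Q c = ∅ → (∀ j, ¬(P (c j) ∧ Q (c j))) ∨
        τP < (#{j | P (c j)} : ℝ) ∨ τQ < (#{j | Q (c j)} : ℝ) := by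
      intro h0
      by_contra! ⟨⟨j, hPj, hQj⟩, hτP, hτQ⟩
      have hj : j ∈ cappedInter τP τQ P Q c := by
        simp [cappedInter, mem_cutoff, hτP, hτQ, hPj, hQj]
      simp [h0] at hj
    split_ifs <;> norm_num
    simp_all
  have hcompl : expect π (fun t => if ¬(P t ∧ Q t) then 1 else 0) =
      1 - expect π (fun t => if P t ∧ Q t then 1 else 0) := by
    have (t : T) : (if ¬(P t ∧ Q t) then 1 else 0 : ℝ) = 1 - if P t ∧ Q t then 1 else 0 := by
      split_ifs <;> simp_all
    simp only [expect, this, mul_sub, mul_one, sum_sub_distrib, hπ.2]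
  calc _ ≤ ∑ c : Fin n → T, (∏ j, π (c j)) * ((if ∀ j, ¬(P (c j) ∧ Q (c j)) then 1 else 0) +
          ((if τP < (#{j | P (c j)} : ℝ) then 1 else 0) +
            (if τQ < (#{j | Q (c j)} : ℝ) then 1 else 0))) :=
        sum_le_sum fun c _ => mul_le_mul_of_nonneg_left (hpoint c) (prod_nonneg fun j _ => hπ.1 _)
    _ ≤ (1 - expect π (fun t => if P t ∧ Q t then 1 else 0)) ^ n + (1 / 64 + 1 / 64) := by
        simp_rw [mul_add, sum_add_distrib]
        rw [sum_prod_mul_ite_forall fun t => ¬(P t ∧ Q t), hcompl]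
        gcongr
        exacts [sum_prod_mul_ite_lt_card_le hπ P, sum_prod_mul_ite_lt_card_le hπ Q]
    _ = _ := by norm_num

end CappedInter

section Blocks

variable {α : Type*} {n ℓ : ℕ}

def block (x : Fin (n * ℓ) → α) (j : Fin n) : Fin ℓ → α :=
  fun i => x (finProdFinEquiv (j, i))

theorem iid_eq_prod_block (ρ : U × V → ℝ) (x : (Fin (n * ℓ) → U) × (Fin (n * ℓ) → V)) :
    iid ρ (n * ℓ) x = ∏ j, iid ρ ℓ (block x.1 j, block x.2 j) := by
  simp only [iid, block]
  rw [← finProdFinEquiv.prod_comp, Fintype.prod_prod_type]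

def blockEquiv : (Fin (n * ℓ) → α) ≃ (Fin n → Fin ℓ → α) :=
  (finProdFinEquiv.arrowCongr (Equiv.refl α)).symm.trans (Equiv.curry _ _ _)

variable (U V) in
/-- Splits `n * ℓ` samples and the private random numbers of both players into `n` blocks,
each holding `ℓ` samples and one random number `< D` of each player. -/
def blocksEquiv (D : ℕ) :
    ((Fin (n * ℓ) → U) × (Fin (n * ℓ) → V)) × (Fin (D ^ n) × Fin (D ^ n)) ≃
      (Fin n → ((Fin ℓ → U) × (Fin ℓ → V)) × (Fin D × Fin D)) :=
  ((blockEquiv.prodCongr blockEquiv).prodCongr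
      (finFunctionFinEquiv.symm.prodCongr finFunctionFinEquiv.symm)).trans <|
    ((Equiv.arrowProdEquivProdArrow _ _ _).symm.prodCongr
      (Equiv.arrowProdEquivProdArrow _ _ _).symm).trans (Equiv.arrowProdEquivProdArrow _ _ _).symm

theorem blocksEquiv_apply (D : ℕ) (x : (Fin (n * ℓ) → U) × (Fin (n * ℓ) → V))
    (r s : Fin (D ^ n)) (j : Fin n) :
    blocksEquiv U V D (x, r, s) j =
      ((block x.1 j, block x.2 j), (finFunctionFinEquiv.symm r j, finFunctionFinEquiv.symm s j)) :=
  rfl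

end Blocks

section Coins

variable [Fintype X] [Fintype Y] {σ : X × Y → ℝ} {D : ℕ} {f : X → ℝ} {g : Y → ℝ}

variable (σ D) in
noncomputable def blockWeight (ω : (X × Y) × (Fin D × Fin D)) : ℝ :=
  σ ω.1 * ((D : ℝ)⁻¹ * (D : ℝ)⁻¹)

/-- A coin of bias `k / D` when `k ≤ D`, tossed with the uniformly random `r < D`. -/
def coin (k : ℕ) (r : Fin D) : Bool :=
  decide ((r : ℕ) < k)

variable (D f g) in
noncomputable def blockCoins (ω : (X × Y) × (Fin D × Fin D)) : Bool × Bool :=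
  (coin ⌈f ω.1.1 * D⌉₊ ω.2.1, coin ⌈g ω.1.2 * D⌉₊ ω.2.2)

variable (σ D f g) in
noncomputable def coinDist : Bool × Bool → ℝ :=
  mapWeight (blockCoins D f g) (blockWeight σ D)

theorem isDist_coinDist (hσ : IsDist σ) (hD : D ≠ 0) : IsDist (coinDist σ D f g) := by
  refine isDist_mapWeight _ _ ⟨fun ω => mul_nonneg (hσ.1 _) (by positivity), ?_⟩
  have hD' : (D : ℝ) ≠ 0 := by exact_mod_cast hD
  rw [Fintype.sum_prod_type, ← hσ.2]
  refine sum_congr rfl fun x _ => ?_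
  simp only [blockWeight, sum_const, card_univ, Fintype.card_prod, Fintype.card_fin, nsmul_eq_mul]
  field_simp
  push_cast
  ring

theorem expect_coinDist_mul (φ ψ : Bool → ℝ) :
    expect (coinDist σ D f g) (fun t => φ t.1 * ψ t.2) =
      ∑ x, σ x * ((∑ r : Fin D, φ (coin ⌈f x.1 * D⌉₊ r) / D) *
        ∑ s : Fin D, ψ (coin ⌈g x.2 * D⌉₊ s) / D) := by
  rw [coinDist, expect_mapWeight, expect, Fintype.sum_prod_type]
  refine sum_congr rfl fun x _ => ?_
  simp_rw [sum_mul_sum, mul_sum, Fintype.sum_prod_type]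
  refine sum_congr rfl fun r _ => sum_congr rfl fun s _ => ?_
  simp only [blockWeight, blockCoins, Function.comp_apply]
  ring

theorem sum_coin_div {a : ℝ} (ha : a ∈ Set.Icc (0 : ℝ) 1) :
    ∑ r : Fin D, (if coin ⌈a * D⌉₊ r = true then 1 else 0 : ℝ) / D = ⌈a * D⌉₊ / D := by
  have hk : ⌈a * D⌉₊ ≤ D :=
    Nat.ceil_le.2 (mul_le_of_le_one_left (Nat.cast_nonneg D) ha.2)
  rw [← sum_div, sum_boole]
  simp [coin, Fin.card_filter_val_lt, hk]

theorem le_ceil_mul_div (a : ℝ) (hD : D ≠ 0) : a ≤ (⌈a * D⌉₊ : ℝ) / D := by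
  rw [le_div_iff₀ (by positivity)]
  exact Nat.le_ceil _

theorem ceil_mul_div_le {a : ℝ} (ha : 0 ≤ a) (hD : D ≠ 0) : (⌈a * D⌉₊ : ℝ) / D ≤ a + 1 / D := by
  rw [div_le_iff₀ (by positivity), add_mul, one_div_mul_cancel (by positivity)]
  exact (Nat.ceil_lt_add_one (by positivity)).le

theorem sum_one_div_card (hD : D ≠ 0) : ∑ _r : Fin D, (1 : ℝ) / D = 1 := by
  simp [hD]

theorem expect_coinDist_fst_le (hσ : IsDist σ) (hf : ∀ u, f u ∈ Set.Icc (0 : ℝ) 1) (hD : D ≠ 0) :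
    expect (coinDist σ D f g) (fun t => if t.1 = true then 1 else 0) ≤
      ∑ x, σ x * f x.1 + 1 / D := by
  have h := expect_coinDist_mul (σ := σ) (D := D) (f := f) (g := g)
    (fun b => if b = true then 1 else 0) 1
  simp only [Pi.one_apply, mul_one, sum_coin_div (hf _), sum_one_div_card hD] at h
  rw [h]
  calc ∑ x, σ x * (⌈f x.1 * D⌉₊ / D : ℝ) ≤ ∑ x, σ x * (f x.1 + 1 / D) :=
        sum_le_sum fun x _ => mul_le_mul_of_nonneg_left (ceil_mul_div_le (hf _).1 hD) (hσ.1 x)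
    _ = _ := by simp only [mul_add, sum_add_distrib, ← sum_mul, hσ.2, one_mul]

theorem expect_coinDist_snd_le (hσ : IsDist σ) (hg : ∀ v, g v ∈ Set.Icc (0 : ℝ) 1) (hD : D ≠ 0) :
    expect (coinDist σ D f g) (fun t => if t.2 = true then 1 else 0) ≤
      ∑ x, σ x * g x.2 + 1 / D := by
  have h := expect_coinDist_mul (σ := σ) (D := D) (f := f) (g := g)
    1 (fun b => if b = true then 1 else 0)
  simp only [Pi.one_apply, one_mul, sum_coin_div (hg _), sum_one_div_card hD] at h
  rw [h]
  calc ∑ x, σ x * (⌈g x.2 * D⌉₊ / D : ℝ) ≤ ∑ x, σ x * (g x.2 + 1 / D) :=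
        sum_le_sum fun x _ => mul_le_mul_of_nonneg_left (ceil_mul_div_le (hg _).1 hD) (hσ.1 x)
    _ = _ := by simp only [mul_add, sum_add_distrib, ← sum_mul, hσ.2, one_mul]

theorem le_expect_coinDist_fst_and_snd (hσ : IsDist σ) (hf : ∀ u, f u ∈ Set.Icc (0 : ℝ) 1)
    (hg : ∀ v, g v ∈ Set.Icc (0 : ℝ) 1) (hD : D ≠ 0) :
    ∑ x, σ x * (f x.1 * g x.2) ≤
      expect (coinDist σ D f g) (fun t => if t.1 = true ∧ t.2 = true then 1 else 0) := by
  have h := expect_coinDist_mul (σ := σ) (D := D) (f := f) (g := g)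
    (fun b => if b = true then 1 else 0) (fun b => if b = true then 1 else 0)
  simp only [sum_coin_div (hf _), sum_coin_div (hg _), ite_zero_mul_ite_zero, mul_one] at h
  rw [h]
  exact sum_le_sum fun x _ => mul_le_mul_of_nonneg_left
    (mul_le_mul (le_ceil_mul_div _ hD) (le_ceil_mul_div _ hD) (hg _).1 (by positivity)) (hσ.1 x)

end Coins

section Protocol

variable {α : Type*} {n ℓ : ℕ}

noncomputable def coinProtocol (τ : ℝ) (D : ℕ) (f : (Fin ℓ → α) → ℝ) (x : Fin (n * ℓ) → α)
    (r : Fin (D ^ n)) : Finset (Fin n) :=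
  cutoff τ {j | coin ⌈f (block x j) * D⌉₊ (finFunctionFinEquiv.symm r j) = true}

variable [Fintype U] [Fintype V]

theorem sum_coinProtocol_inter_eq (ρ : U × V → ℝ) (τA τB : ℝ) (D : ℕ)
    (f : (Fin ℓ → U) → ℝ) (g : (Fin ℓ → V) → ℝ) (F : Finset (Fin n) → ℝ) :
    ∑ x : (Fin (n * ℓ) → U) × (Fin (n * ℓ) → V), ∑ r : Fin (D ^ n), ∑ s : Fin (D ^ n),
      iid ρ (n * ℓ) x * (((D ^ n : ℕ) : ℝ)⁻¹ * ((D ^ n : ℕ) : ℝ)⁻¹) *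
        F (coinProtocol τA D f x.1 r ∩ coinProtocol τB D g x.2 s) =
    ∑ c : Fin n → Bool × Bool, (∏ j, coinDist (iid ρ ℓ) D f g (c j)) *
      F (cappedInter τA τB (fun t => t.1 = true) (fun t => t.2 = true) c) := by
  rw [coinDist, ← sum_prod_mul_comp_eq_sum_prod_mapWeight]
  simp only [← Fintype.sum_prod_type']
  refine Fintype.sum_equiv (blocksEquiv U V D) _ _ fun ⟨x, r, s⟩ => ?_
  congr 1
  simp only [blocksEquiv_apply, blockWeight, prod_mul_distrib, iid_eq_prod_block, prod_const,
    card_univ, Fintype.card_fin]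
  push_cast
  ring

theorem isDist_iid {ρ : U × V → ℝ} (hρ : IsDist ρ) (ℓ : ℕ) : IsDist (iid ρ ℓ) := by
  refine ⟨fun x => prod_nonneg fun i _ => hρ.1 _, ?_⟩
  rw [← (Equiv.arrowProdEquivProdArrow _ _ _).sum_comp]
  simpa [iid, hρ.2] using (Fintype.prod_sum fun (_ : Fin ℓ) => ρ).symm

theorem exists_agreement_cost_lt {ρ : U × V → ℝ} {p K : ℝ} (hp : p ≤ 1) (hK : agr ρ p < K) :
    ∃ (ℓ : ℕ) (f : (Fin ℓ → U) → ℝ) (g : (Fin ℓ → V) → ℝ),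
      (∀ x, f x ∈ Set.Icc (0 : ℝ) 1) ∧ (∀ y, g y ∈ Set.Icc (0 : ℝ) 1) ∧
      p ≤ ∑ x, iid ρ ℓ x * (f x.1 * g x.2) ∧
      (∑ x, iid ρ ℓ x * f x.1) + (∑ x, iid ρ ℓ x * g x.2) < K := by
  obtain ⟨c, ⟨ℓ, f, g, hf, hg, hsucc, rfl⟩, hc⟩ := exists_lt_of_csInf_lt (by
    exact ⟨2, 0, 1, 1, fun _ => by simp, fun _ => by simp, by simpa [iid] using hp,
      by norm_num [iid]⟩) hK
  exact ⟨ℓ, f, g, hf, hg, hsucc, hc⟩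

end Protocol

theorem stmt9_general {U V : Type} [Fintype U] [Fintype V]
    (ρ : U × V → ℝ) (hρ : IsDist ρ) (n : ℕ) (hn : 1 ≤ n)
    (K : ℝ) (hK : agr ρ (1/(n:ℝ)) < K) :
    ∃ (ℓ sA sB : ℕ) (μA : Fin sA → ℝ) (μB : Fin sB → ℝ)
      (A : (Fin ℓ → U) → Fin sA → Finset (Fin n))
      (B : (Fin ℓ → V) → Fin sB → Finset (Fin n)),
      IsDist μA ∧ IsDist μB ∧
      (∀ (x : (Fin ℓ → U) × (Fin ℓ → V)) (rA : Fin sA),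
          ((A x.1 rA).card : ℝ) ≤ 3 * n * K + 16) ∧
      (∀ (x : (Fin ℓ → U) × (Fin ℓ → V)) (rB : Fin sB),
          ((B x.2 rB).card : ℝ) ≤ 3 * n * K + 16) ∧
      ((∑ x : (Fin ℓ → U) × (Fin ℓ → V), ∑ rA, ∑ rB,
          iid ρ ℓ x * (μA rA * μB rB) *
            (if A x.1 rA ∩ B x.2 rB = ∅ then (1:ℝ) else 0))
        < (Real.exp 1)⁻¹ + 1/2) ∧
      (∀ i : Fin n,
        (∑ x : (Fin ℓ → U) × (Fin ℓ → V), ∑ rA, ∑ rB,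
            iid ρ ℓ x * (μA rA * μB rB) *
              (if i ∈ A x.1 rA ∩ B x.2 rB
                then (((A x.1 rA ∩ B x.2 rB).card : ℝ))⁻¹ else 0))
          = (∑ x : (Fin ℓ → U) × (Fin ℓ → V), ∑ rA, ∑ rB,
              iid ρ ℓ x * (μA rA * μB rB) *
                (if (A x.1 rA ∩ B x.2 rB).Nonempty then (1:ℝ) else 0)) / n) := by
  have : NeZero n := ⟨by omega⟩
  obtain ⟨ℓ, f, g, hf, hg, hsucc, hcost⟩ :=
    exists_agreement_cost_lt (div_le_one_of_le₀ (by exact_mod_cast hn) (by positivity)) hK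
  have hσ := isDist_iid hρ ℓ
  set π := coinDist (iid ρ ℓ) n f g
  have hπ : IsDist π := isDist_coinDist hσ (NeZero.ne n)
  set pA := expect π fun t => if t.1 = true then 1 else 0
  set pB := expect π fun t => if t.2 = true then 1 else 0
  have hpA : pA ≤ ∑ x, iid ρ ℓ x * f x.1 + 1 / n := expect_coinDist_fst_le hσ hf (NeZero.ne n)
  have hpB : pB ≤ ∑ x, iid ρ ℓ x * g x.2 + 1 / n := expect_coinDist_snd_le hσ hg (NeZero.ne n)
  have hcostf : 0 ≤ ∑ x, iid ρ ℓ x * f x.1 := expect_nonneg hσ fun x => (hf x.1).1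
  have hcostg : 0 ≤ ∑ x, iid ρ ℓ x * g x.2 := expect_nonneg hσ fun x => (hg x.2).1
  refine ⟨n * ℓ, n ^ n, n ^ n, _, _, coinProtocol (3 * n * pA + 8) n f,
    coinProtocol (3 * n * pB + 8) n g, isDist_const_inv (pow_ne_zero n (NeZero.ne n)),
    isDist_const_inv (pow_ne_zero n (NeZero.ne n)), fun x r => ?_, fun x s => ?_, ?_, fun i => ?_⟩
  · exact card_cutoff_le_of_le (expect_nonneg hπ fun t => by positivity) (by linarith) _
  · exact card_cutoff_le_of_le (expect_nonneg hπ fun t => by positivity) (by linarith) _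
  · rw [sum_coinProtocol_inter_eq ρ _ _ n f g fun S => if S = ∅ then 1 else 0]
    refine (sum_prod_mul_ite_cappedInter_eq_empty_le (fun t : Bool × Bool => t.1 = true)
      (fun t => t.2 = true) hπ).trans_lt ?_
    linarith [one_sub_pow_le_exp_neg_one hn
      (hsucc.trans (le_expect_coinDist_fst_and_snd hσ hf hg (NeZero.ne n)))
      (expect_ite_le_one hπ fun t : Bool × Bool => t.1 = true ∧ t.2 = true)]
  · rw [sum_coinProtocol_inter_eq ρ _ _ n f g fun S => if i ∈ S then (#S : ℝ)⁻¹ else 0,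
      sum_coinProtocol_inter_eq ρ _ _ n f g fun S => if S.Nonempty then 1 else 0]
    exact sum_mul_ite_mem_inv_card_eq _ _
      (fun k => (Equiv.addRight k).arrowCongr (Equiv.refl _))
      (fun k c => Equiv.prod_comp (Equiv.addRight k).symm fun j => π (c j))
      (fun k c => cappedInter_comp_symm _ _ _ _ (Equiv.addRight k) c) i

theorem stmt9 {U V : Type} [Fintype U] [Fintype V] [Nonempty U] [Nonempty V]
    (ρ : U × V → ℝ) (hρ : IsDist ρ) (n : ℕ) (hn : 1 ≤ n)
    (K : ℝ) (hK : agr ρ (1/(n:ℝ)) < K) :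
    ∃ (ℓ sA sB : ℕ) (μA : Fin sA → ℝ) (μB : Fin sB → ℝ)
      (A : (Fin ℓ → U) → Fin sA → Finset (Fin n))
      (B : (Fin ℓ → V) → Fin sB → Finset (Fin n)),
      IsDist μA ∧ IsDist μB ∧
      (∀ (x : (Fin ℓ → U) × (Fin ℓ → V)) (rA : Fin sA),
          ((A x.1 rA).card : ℝ) ≤ 3 * n * K + 16) ∧
      (∀ (x : (Fin ℓ → U) × (Fin ℓ → V)) (rB : Fin sB),
          ((B x.2 rB).card : ℝ) ≤ 3 * n * K + 16) ∧
      ((∑ x : (Fin ℓ → U) × (Fin ℓ → V), ∑ rA, ∑ rB,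
          iid ρ ℓ x * (μA rA * μB rB) *
            (if A x.1 rA ∩ B x.2 rB = ∅ then (1:ℝ) else 0))
        < (Real.exp 1)⁻¹ + 1/2) ∧
      (∀ i : Fin n,
        (∑ x : (Fin ℓ → U) × (Fin ℓ → V), ∑ rA, ∑ rB,
            iid ρ ℓ x * (μA rA * μB rB) *
              (if i ∈ A x.1 rA ∩ B x.2 rB
                then (((A x.1 rA ∩ B x.2 rB).card : ℝ))⁻¹ else 0))
          = (∑ x : (Fin ℓ → U) × (Fin ℓ → V), ∑ rA, ∑ rB,
              iid ρ ℓ x * (μA rA * μB rB) *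
                (if (A x.1 rA ∩ B x.2 rB).Nonempty then (1:ℝ) else 0)) / n) :=
  stmt9_general ρ hρ n hn K hK

end SR
end
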